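/- Let {A, S, Π} be an S-node on the complex Hilbert space H such that S ≥ εI for some ε > 0 and Φ₂ is injective. Let K ⊆ H be a closed subspace with orthogonal projection P : H → H onto K, suppose PA(I − P) = 0, and suppose P∘Φ₂ is injective. Define the compressed operators on K: A_K ξ := P(Aξ), S_K ξ := P(Sξ) for ξ ∈ K, and Φ₂ᴷ := P∘Φ₂ : ℂ^p → K. Fix z in the open upper half-plane such that I − zA and I − z̄A are boundedly invertible on H and I − zA_K and I − z̄A_K are boundedly invertible on K. Then, with ρ_H(z̄, z) := i(z − z̄)Φ₂*(I − z̄A*)^{−1}S^{−1}(I − zA)^{−1}Φ₂ and ρ_K(z̄, z) := i(z − z̄)(Φ₂ᴷ)*(I − z̄A_K*)^{−1}S_K^{−1}(I − zA_K)^{−1}Φ₂ᴷ, one has 0 < −ρ_K(z̄, z) ≤ −ρ_H(z̄, z) in the Loewner order of p×p Hermitian matrices (in particular both −ρ_K(z̄,z) and −ρ_H(z̄,z) are positive definite). -/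

import Mathlib

/-!
Write `P` for the orthogonal projection onto `K` and `R(z) = (I - zA)⁻¹`. The quadratic form of
`-ρ_H(z̄, z)` at `x` is `2 Im z ⟪S⁻¹ u, u⟫` with `u = R(z) Φ₂ x`. Since `P A (I - P) = 0`, the
projection intertwines the resolvents, `P R(z) = R_K(z) P`, so the form of `-ρ_K(z̄, z)` at `x` is
`2 Im z ⟪S_K⁻¹ P u, P u⟫`. Monotonicity is therefore the operator inequality `P* S_K⁻¹ P ≤ S⁻¹`
for the compression `S_K = P S P*` of a positive invertible `S`. Strict positivity of `-ρ_K`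
comes from `S_K ≥ ε I` and the injectivity of `R_K(z) P Φ₂`, and `-ρ_H ≥ -ρ_K` then makes `-ρ_H`
positive definite as well.
-/

open Matrix MeasureTheory ContinuousLinearMap
open scoped ComplexOrder

noncomputable section

/-- The matrix (in the standard basis) of a continuous linear operator on `ℂ^p`. -/
def opToMat {p : ℕ} (T : EuclideanSpace ℂ (Fin p) →L[ℂ] EuclideanSpace ℂ (Fin p)) :
    Matrix (Fin p) (Fin p) ℂ :=
  (Matrix.toEuclideanCLM (𝕜 := ℂ) (n := Fin p)).symm T

/-- The `2p × 2p` matrix `Π^* B Π` with blocks `Φ_i^* B Φ_j`, for `Π = [Φ₁ Φ₂]`. -/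
def sandwich {p : ℕ} {H : Type*} [NormedAddCommGroup H] [InnerProductSpace ℂ H]
    [CompleteSpace H] (B : H →L[ℂ] H) (Φ₁ Φ₂ : EuclideanSpace ℂ (Fin p) →L[ℂ] H) :
    Matrix (Fin p ⊕ Fin p) (Fin p ⊕ Fin p) ℂ :=
  Matrix.fromBlocks
    (opToMat (adjoint Φ₁ ∘L B ∘L Φ₁)) (opToMat (adjoint Φ₁ ∘L B ∘L Φ₂))
    (opToMat (adjoint Φ₂ ∘L B ∘L Φ₁)) (opToMat (adjoint Φ₂ ∘L B ∘L Φ₂))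

/-- The frame `𝔄(S,z) = I_{2p} - i z Π^* (I - z A^*)⁻¹ S⁻¹ Π J` of an `S`-node,
identified with a `2p × 2p` complex matrix. -/
def frameS {p : ℕ} {H : Type*} [NormedAddCommGroup H] [InnerProductSpace ℂ H]
    [CompleteSpace H] (A S : H →L[ℂ] H) (Φ₁ Φ₂ : EuclideanSpace ℂ (Fin p) →L[ℂ] H)
    (z : ℂ) : Matrix (Fin p ⊕ Fin p) (Fin p ⊕ Fin p) ℂ :=
  1 - (Complex.I * z) •
    (sandwich (Ring.inverse (1 - z • adjoint A) ∘L Ring.inverse S) Φ₁ Φ₂ *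
      Matrix.fromBlocks 0 1 1 0)

/-- The `p × p` matrix `ρ(z,w) = i (w - z) Φ₂^* (I - z A^*)⁻¹ S⁻¹ (I - w A)⁻¹ Φ₂`. -/
def rhoS {p : ℕ} {H : Type*} [NormedAddCommGroup H] [InnerProductSpace ℂ H]
    [CompleteSpace H] (A S : H →L[ℂ] H) (Φ₂ : EuclideanSpace ℂ (Fin p) →L[ℂ] H)
    (z w : ℂ) : Matrix (Fin p) (Fin p) ℂ :=
  (Complex.I * (w - z)) • opToMat (adjoint Φ₂ ∘L Ring.inverse (1 - z • adjoint A) ∘L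
    Ring.inverse S ∘L Ring.inverse (1 - w • A) ∘L Φ₂)

open scoped InnerProductSpace

namespace ContinuousLinearMap

section Semiring

variable {R E F : Type*} [Semiring R] [TopologicalSpace E] [AddCommMonoid E] [Module R E]
  [TopologicalSpace F] [AddCommMonoid F] [Module R F]

theorem apply_ringInverse_apply {T : E →L[R] E} (hT : IsUnit T) (x : E) :
    T (Ring.inverse T x) = x :=
  congr($(Ring.mul_inverse_cancel T hT) x)

theorem comp_ringInverse_eq_of_comp_eq
    {U : E →L[R] E} {V : F →L[R] F} {Q : E →L[R] F} (hU : IsUnit U) (hV : IsUnit V)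
    (h : Q ∘L U = V ∘L Q) : Q ∘L Ring.inverse U = Ring.inverse V ∘L Q :=
  calc Q ∘L Ring.inverse U = (Ring.inverse V * V) ∘L Q ∘L Ring.inverse U := by
        rw [Ring.inverse_mul_cancel V hV, one_def, id_comp]
    _ = Ring.inverse V ∘L Q ∘L (U * Ring.inverse U) := by
        rw [mul_def, mul_def, comp_assoc, ← comp_assoc V, ← h, comp_assoc]
    _ = Ring.inverse V ∘L Q := by rw [Ring.mul_inverse_cancel U hU, one_def, comp_id]

end Semiring

variable {𝕜 G : Type*} [RCLike 𝕜] [NormedAddCommGroup G] [InnerProductSpace 𝕜 G]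

theorem adjoint_ringInverse_one_sub_smul [CompleteSpace G] (A : G →L[𝕜] G) (z : 𝕜) :
    adjoint (Ring.inverse (1 - z • A)) = Ring.inverse (1 - starRingEnd 𝕜 z • adjoint A) := by
  rw [← star_eq_adjoint, ← Ring.inverse_star, star_sub, star_one, star_smul, star_eq_adjoint]
  rfl

theorem IsPositive.ringInverse [CompleteSpace G] {T : G →L[𝕜] G} (hT : T.IsPositive) :
    (Ring.inverse T).IsPositive := by
  by_cases hTu : IsUnit T
  · have hself : IsSelfAdjoint (Ring.inverse T) := hT.isSelfAdjoint.ringInverse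
    have h := hT.conj_adjoint (Ring.inverse T)
    rwa [hself.adjoint_eq, ← mul_def, ← mul_def, Ring.mul_inverse_cancel T hTu, mul_one] at h
  · rw [Ring.inverse_non_unit T hTu]
    exact isPositive_zero

theorem IsPositive.of_coercive {S : G →L[𝕜] G} (hS : S.IsSymmetric) {ε : ℝ} (hε : 0 ≤ ε)
    (hcoer : ∀ f, ε * ‖f‖ ^ 2 ≤ RCLike.re ⟪S f, f⟫_𝕜) : S.IsPositive :=
  ⟨hS, fun f => (by positivity : 0 ≤ ε * ‖f‖ ^ 2).trans (hcoer f)⟩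

theorem isUnit_of_coercive [CompleteSpace G] {S : G →L[𝕜] G} {ε : ℝ} (hε : 0 < ε)
    (hcoer : ∀ f, ε * ‖f‖ ^ 2 ≤ RCLike.re ⟪S f, f⟫_𝕜) : IsUnit S :=
  isUnit_of_forall_le_norm_inner_map S (c := ⟨ε, hε.le⟩) hε fun f =>
    calc ‖f‖ ^ 2 * ε = ε * ‖f‖ ^ 2 := mul_comm _ _
      _ ≤ RCLike.re ⟪S f, f⟫_𝕜 := hcoer f
      _ ≤ ‖⟪S f, f⟫_𝕜‖ := RCLike.re_le_norm _

theorem re_inner_ringInverse_apply_pos [CompleteSpace G] {S : G →L[𝕜] G} {ε : ℝ} (hε : 0 < ε)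
    (hcoer : ∀ f, ε * ‖f‖ ^ 2 ≤ RCLike.re ⟪S f, f⟫_𝕜) {u : G} (hu : u ≠ 0) :
    0 < RCLike.re ⟪Ring.inverse S u, u⟫_𝕜 := by
  set v := Ring.inverse S u
  have hSv : S v = u := apply_ringInverse_apply (isUnit_of_coercive hε hcoer) u
  have hv : v ≠ 0 := by rintro hv; rw [hv, map_zero] at hSv; exact hu hSv.symm
  calc 0 < ε * ‖v‖ ^ 2 := by positivity
    _ ≤ RCLike.re ⟪S v, v⟫_𝕜 := hcoer v
    _ = RCLike.re ⟪v, u⟫_𝕜 := by rw [inner_re_symm, hSv]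

end ContinuousLinearMap

namespace Submodule

variable {𝕜 G : Type*} [RCLike 𝕜] [NormedAddCommGroup G] [InnerProductSpace 𝕜 G]
  (K : Submodule 𝕜 G) [K.HasOrthogonalProjection]

def compression (T : G →L[𝕜] G) : K →L[𝕜] K :=
  K.orthogonalProjectionOnto ∘L T ∘L K.subtypeL

theorem inner_compression_apply_self (T : G →L[𝕜] G) (ξ : K) :
    ⟪K.compression T ξ, ξ⟫_𝕜 = ⟪T ξ, ξ⟫_𝕜 :=
  K.inner_orthogonalProjectionOnto_eq_of_mem_right ξ (T ξ)

theorem orthogonalProjectionOnto_comp_eq_compression_comp {A : G →L[𝕜] G}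
    (hA : (K.subtypeL ∘L K.orthogonalProjectionOnto) ∘L A ∘L
      (1 - K.subtypeL ∘L K.orthogonalProjectionOnto) = 0) :
    K.orthogonalProjectionOnto ∘L A = K.compression A ∘L K.orthogonalProjectionOnto := by
  ext1 x
  have hx := congr($hA x)
  simp only [ContinuousLinearMap.comp_apply, _root_.sub_apply, one_apply_eq_self,
    _root_.zero_apply, map_sub, subtypeL_apply, sub_eq_zero] at hx
  exact Subtype.ext hx

theorem orthogonalProjectionOnto_comp_ringInverse {A : G →L[𝕜] G}
    (hA : K.orthogonalProjectionOnto ∘L A = K.compression A ∘L K.orthogonalProjectionOnto) {z : 𝕜}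
    (hU : IsUnit (1 - z • A)) (hV : IsUnit (1 - z • K.compression A)) :
    K.orthogonalProjectionOnto ∘L Ring.inverse (1 - z • A) =
      Ring.inverse (1 - z • K.compression A) ∘L K.orthogonalProjectionOnto := by
  refine ContinuousLinearMap.comp_ringInverse_eq_of_comp_eq hU hV ?_
  rw [ContinuousLinearMap.comp_sub, ContinuousLinearMap.sub_comp, ContinuousLinearMap.comp_smul,
    ContinuousLinearMap.smul_comp, hA]
  rfl

/-- With `v = S⁻¹ h` and `g = S_K⁻¹ P h`, both cross terms of `⟪S (v - g), v - g⟫ ≥ 0` equal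
`⟪S g, g⟫`, which leaves `⟪S⁻¹ h, h⟫ - ⟪S_K⁻¹ P h, P h⟫ ≥ 0`. -/
theorem re_inner_ringInverse_compression_le {S : G →L[𝕜] G} (hS : S.IsPositive)
    (hSu : IsUnit S) (hSKu : IsUnit (K.compression S)) (h : G) :
    RCLike.re ⟪Ring.inverse (K.compression S) (K.orthogonalProjectionOnto h),
      K.orthogonalProjectionOnto h⟫_𝕜 ≤ RCLike.re ⟪Ring.inverse S h, h⟫_𝕜 := by
  set g := Ring.inverse (K.compression S) (K.orthogonalProjectionOnto h)
  set v := Ring.inverse S h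
  have hv : S v = h := apply_ringInverse_apply hSu h
  have hg : K.orthogonalProjectionOnto (S g) = K.orthogonalProjectionOnto h :=
    apply_ringInverse_apply hSKu _
  have hcross : ⟪h, (g : G)⟫_𝕜 = ⟪S g, g⟫_𝕜 := by
    rw [← K.inner_orthogonalProjectionOnto_eq_of_mem_right, ← hg,
      K.inner_orthogonalProjectionOnto_eq_of_mem_right]
  have hnonneg := hS.re_inner_nonneg_left (v - g)
  rw [map_sub, inner_sub_left, inner_sub_right, inner_sub_right, hS.inner_left_eq_inner_right g v,
    hv, hcross] at hnonneg
  rw [K.inner_orthogonalProjectionOnto_eq_of_mem_left, inner_re_symm, inner_re_symm v]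
  simp only [map_sub] at hnonneg
  linarith [inner_re_symm (𝕜 := 𝕜) h (g : G)]

theorem isPositive_ringInverse_sub_ringInverse_compression [CompleteSpace G] [CompleteSpace K]
    {S : G →L[𝕜] G} (hS : S.IsPositive) (hSu : IsUnit S) (hSKu : IsUnit (K.compression S)) :
    (Ring.inverse S -
      K.subtypeL ∘L Ring.inverse (K.compression S) ∘L K.orthogonalProjectionOnto).IsPositive := by
  have hSK : (K.compression S).IsPositive := hS.orthogonalProjectionOnto_comp K
  refine isPositive_def'.mpr ⟨hS.ringInverse.isSelfAdjoint.sub ?_, fun h => ?_⟩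
  · simpa only [adjoint_subtypeL] using hSK.ringInverse.isSelfAdjoint.conj_adjoint K.subtypeL
  · rw [reApplyInnerSelf, _root_.sub_apply, inner_sub_left, map_sub, sub_nonneg,
      ContinuousLinearMap.comp_apply, ContinuousLinearMap.comp_apply, subtypeL_apply,
      ← K.inner_orthogonalProjectionOnto_eq_of_mem_left]
    exact K.re_inner_ringInverse_compression_le hS hSu hSKu h

end Submodule

section opToMat

variable {p : ℕ}

theorem posSemidef_opToMat_iff {T : EuclideanSpace ℂ (Fin p) →L[ℂ] EuclideanSpace ℂ (Fin p)} :
    (opToMat T).PosSemidef ↔ T.IsPositive := by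
  rw [← Matrix.isPositive_toEuclideanLin_iff, ← coe_toEuclideanCLM_eq_toEuclideanLin, opToMat,
    StarAlgEquiv.apply_symm_apply, isPositive_toLinearMap_iff]

theorem star_dotProduct_opToMat_mulVec
    (T : EuclideanSpace ℂ (Fin p) →L[ℂ] EuclideanSpace ℂ (Fin p)) (x : Fin p → ℂ) :
    star x ⬝ᵥ (opToMat T *ᵥ x) = ⟪WithLp.toLp 2 x, T (WithLp.toLp 2 x)⟫_ℂ := by
  conv_rhs => rw [← StarAlgEquiv.apply_symm_apply toEuclideanCLM T]
  rw [← opToMat, toEuclideanCLM_toLp, EuclideanSpace.inner_toLp_toLp, dotProduct_comm]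

theorem posDef_opToMat_of_isPositive
    {T : EuclideanSpace ℂ (Fin p) →L[ℂ] EuclideanSpace ℂ (Fin p)} (hT : T.IsPositive)
    (hpos : ∀ x, x ≠ 0 → 0 < RCLike.re ⟪T x, x⟫_ℂ) : (opToMat T).PosDef := by
  refine .of_dotProduct_mulVec_pos (posSemidef_opToMat_iff.mpr hT).isHermitian fun x hx => ?_
  rw [star_dotProduct_opToMat_mulVec]
  refine (hT.inner_nonneg_right _).lt_of_ne fun h0 => ?_
  have := hpos (WithLp.toLp 2 x) (by simpa using hx)
  rw [← inner_re_symm, ← h0] at this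
  exact this.false

end opToMat

section rho

variable {p : ℕ} {G : Type*} [NormedAddCommGroup G] [InnerProductSpace ℂ G] [CompleteSpace G]

theorem neg_rhoS_conj_eq (A S : G →L[ℂ] G) (Φ : EuclideanSpace ℂ (Fin p) →L[ℂ] G) (z : ℂ) :
    -rhoS A S Φ (starRingEnd ℂ z) z = (2 * z.im) •
      opToMat (adjoint (Ring.inverse (1 - z • A) ∘L Φ) ∘L Ring.inverse S ∘L
        Ring.inverse (1 - z • A) ∘L Φ) := by
  have hscalar : -(Complex.I * (z - starRingEnd ℂ z)) = ((2 * z.im : ℝ) : ℂ) := by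
    rw [Complex.sub_conj]
    push_cast
    linear_combination (-2 * (z.im : ℂ)) * Complex.I_sq
  rw [rhoS, ← neg_smul, hscalar, adjoint_comp, ← adjoint_ringInverse_one_sub_smul, comp_assoc]
  exact (RCLike.real_smul_eq_coe_smul _ _).symm

theorem posDef_neg_rhoS_conj {A S : G →L[ℂ] G} (hS : S.IsPositive) {ε : ℝ} (hε : 0 < ε)
    (hcoer : ∀ f, ε * ‖f‖ ^ 2 ≤ RCLike.re ⟪S f, f⟫_ℂ)
    {Φ : EuclideanSpace ℂ (Fin p) →L[ℂ] G} (hΦ : Function.Injective Φ) {z : ℂ} (hz : 0 < z.im)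
    (hU : IsUnit (1 - z • A)) : (-rhoS A S Φ (starRingEnd ℂ z) z).PosDef := by
  set W := Ring.inverse (1 - z • A) ∘L Φ
  have hW : Function.Injective W :=
    (isUnit_iff_bijective.mp hU.ringInverse).injective.comp hΦ
  rw [neg_rhoS_conj_eq]
  refine .smul (posDef_opToMat_of_isPositive (hS.ringInverse.adjoint_conj W) fun x hx => ?_)
    (by positivity)
  rw [ContinuousLinearMap.comp_apply, adjoint_inner_left, ContinuousLinearMap.comp_apply]
  exact re_inner_ringInverse_apply_pos hε hcoer ((map_ne_zero_iff W hW).mpr hx)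

theorem Submodule.posSemidef_neg_rhoS_sub_neg_rhoS_compression (K : Submodule ℂ G)
    [CompleteSpace K] {A S : G →L[ℂ] G} (hS : S.IsPositive) (hSu : IsUnit S)
    (hSKu : IsUnit (K.compression S))
    (hA : K.orthogonalProjectionOnto ∘L A = K.compression A ∘L K.orthogonalProjectionOnto)
    (Φ : EuclideanSpace ℂ (Fin p) →L[ℂ] G) {z : ℂ} (hz : 0 ≤ z.im) (hU : IsUnit (1 - z • A))
    (hV : IsUnit (1 - z • K.compression A)) :
    (-rhoS A S Φ (starRingEnd ℂ z) z - -rhoS (K.compression A) (K.compression S)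
      (K.orthogonalProjectionOnto ∘L Φ) (starRingEnd ℂ z) z).PosSemidef := by
  set W := Ring.inverse (1 - z • A) ∘L Φ
  have hW : Ring.inverse (1 - z • K.compression A) ∘L K.orthogonalProjectionOnto ∘L Φ =
      K.orthogonalProjectionOnto ∘L W := by
    rw [← comp_assoc, ← K.orthogonalProjectionOnto_comp_ringInverse hA hU hV, comp_assoc]
  rw [neg_rhoS_conj_eq, neg_rhoS_conj_eq, hW, ← smul_sub]
  unfold opToMat
  rw [← map_sub]
  refine .smul (posSemidef_opToMat_iff.mpr ?_) (by positivity)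
  convert (K.isPositive_ringInverse_sub_ringInverse_compression hS hSu hSKu).adjoint_conj W
    using 1
  simp only [W, adjoint_comp, adjoint_orthogonalProjectionOnto, comp_sub, sub_comp, comp_assoc]

end rho

theorem neg_rho_positive_and_monotone_under_compression_general
    {p : ℕ} {H : Type*} [NormedAddCommGroup H] [InnerProductSpace ℂ H]
    [CompleteSpace H] (A S : H →L[ℂ] H) (Φ₂ : EuclideanSpace ℂ (Fin p) →L[ℂ] H)
    (hS : IsSelfAdjoint S)
    (ε : ℝ) (hε : 0 < ε)
    (hSpos : ∀ f : H, ε * ‖f‖ ^ 2 ≤ (inner ℂ (S f) f : ℂ).re)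
    (K : Submodule ℂ H) [CompleteSpace K]
    (hPA : (K.subtypeL ∘L K.orthogonalProjectionOnto) ∘L A ∘L
      (1 - K.subtypeL ∘L K.orthogonalProjectionOnto) = 0)
    (hΦ₂K : Function.Injective (K.orthogonalProjectionOnto ∘L Φ₂))
    (z : ℂ) (hz : 0 < z.im)
    (hinv1 : IsUnit ((1 : H →L[ℂ] H) - z • A))
    (hinvK1 : IsUnit ((1 : K →L[ℂ] K) -
      z • (K.orthogonalProjectionOnto ∘L A ∘L K.subtypeL))) :
    (-(rhoS (K.orthogonalProjectionOnto ∘L A ∘L K.subtypeL)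
        (K.orthogonalProjectionOnto ∘L S ∘L K.subtypeL)
        (K.orthogonalProjectionOnto ∘L Φ₂) (starRingEnd ℂ z) z)).PosDef ∧
    (-(rhoS A S Φ₂ (starRingEnd ℂ z) z)).PosDef ∧
    (-(rhoS A S Φ₂ (starRingEnd ℂ z) z) -
      -(rhoS (K.orthogonalProjectionOnto ∘L A ∘L K.subtypeL)
          (K.orthogonalProjectionOnto ∘L S ∘L K.subtypeL)
          (K.orthogonalProjectionOnto ∘L Φ₂) (starRingEnd ℂ z) z)).PosSemidef := by
  have hSK : ∀ ξ : K, ε * ‖ξ‖ ^ 2 ≤ RCLike.re ⟪K.compression S ξ, ξ⟫_ℂ := fun ξ => by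
    rw [K.inner_compression_apply_self]
    exact hSpos ξ
  have hSnonneg : S.IsPositive := .of_coercive hS.isSymmetric hε.le hSpos
  have hρK : (-rhoS (K.compression A) (K.compression S) (K.orthogonalProjectionOnto ∘L Φ₂)
      (starRingEnd ℂ z) z).PosDef :=
    posDef_neg_rhoS_conj (hSnonneg.orthogonalProjectionOnto_comp K) hε hSK hΦ₂K hz hinvK1
  have hmono := K.posSemidef_neg_rhoS_sub_neg_rhoS_compression hSnonneg
    (isUnit_of_coercive hε hSpos) (isUnit_of_coercive hε hSK)
    (K.orthogonalProjectionOnto_comp_eq_compression_comp hPA) Φ₂ hz.le hinv1 hinvK1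
  exact ⟨hρK, add_sub_cancel _ (-rhoS A S Φ₂ _ z) ▸ hρK.add_posSemidef hmono, hmono⟩

/-- `0 < -ρ_K(conj z, z) ≤ -ρ_H(conj z, z)` for a compression of an `S`-node
with `S ≥ ε I` and injective `Φ₂`, `P Φ₂`. -/
theorem neg_rho_positive_and_monotone_under_compression
    {p : ℕ} (hp : 1 ≤ p) {H : Type*} [NormedAddCommGroup H] [InnerProductSpace ℂ H]
    [CompleteSpace H] (A S : H →L[ℂ] H) (Φ₁ Φ₂ : EuclideanSpace ℂ (Fin p) →L[ℂ] H)
    (hS : IsSelfAdjoint S)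
    (hnode : A ∘L S - S ∘L adjoint A =
      Complex.I • (Φ₁ ∘L adjoint Φ₂ + Φ₂ ∘L adjoint Φ₁))
    (ε : ℝ) (hε : 0 < ε)
    (hSpos : ∀ f : H, ε * ‖f‖ ^ 2 ≤ (inner ℂ (S f) f : ℂ).re)
    (hΦ₂ : Function.Injective Φ₂)
    (K : Submodule ℂ H) [CompleteSpace K]
    (hPA : (K.subtypeL ∘L K.orthogonalProjectionOnto) ∘L A ∘L
      (1 - K.subtypeL ∘L K.orthogonalProjectionOnto) = 0)
    (hΦ₂K : Function.Injective (K.orthogonalProjectionOnto ∘L Φ₂))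
    (z : ℂ) (hz : 0 < z.im)
    (hinv1 : IsUnit ((1 : H →L[ℂ] H) - z • A))
    (hinv2 : IsUnit ((1 : H →L[ℂ] H) - (starRingEnd ℂ z) • A))
    (hinvK1 : IsUnit ((1 : K →L[ℂ] K) -
      z • (K.orthogonalProjectionOnto ∘L A ∘L K.subtypeL)))
    (hinvK2 : IsUnit ((1 : K →L[ℂ] K) -
      (starRingEnd ℂ z) • (K.orthogonalProjectionOnto ∘L A ∘L K.subtypeL))) :
    (-(rhoS (K.orthogonalProjectionOnto ∘L A ∘L K.subtypeL)
        (K.orthogonalProjectionOnto ∘L S ∘L K.subtypeL)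
        (K.orthogonalProjectionOnto ∘L Φ₂) (starRingEnd ℂ z) z)).PosDef ∧
    (-(rhoS A S Φ₂ (starRingEnd ℂ z) z)).PosDef ∧
    (-(rhoS A S Φ₂ (starRingEnd ℂ z) z) -
      -(rhoS (K.orthogonalProjectionOnto ∘L A ∘L K.subtypeL)
          (K.orthogonalProjectionOnto ∘L S ∘L K.subtypeL)
          (K.orthogonalProjectionOnto ∘L Φ₂) (starRingEnd ℂ z) z)).PosSemidef :=
  neg_rho_positive_and_monotone_under_compression_general A S Φ₂ hS ε hε hSpos K hPA hΦ₂K z hz hinv1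
    hinvK1

end
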